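/- Let t ∈ ℂ with t^3 ≠ 1 and t(t^3 + 8) = 0 (i.e., t = 0 or t^3 = −8). Then the cubic form g_t = t(α_0^3 + α_1^3 + α_2^3) − (t^3 + 2) α_0 α_1 α_2 ∈ ℂ[α_0, α_1, α_2] factors as a product g_t = ℓ_1 ℓ_2 ℓ_3 of three linear forms that are pairwise non-proportional and have no common zero in ℂ^3 ∖ {0}; that is, the Cayleyan curve of the Hesse cubic f_t decomposes into a union of three lines in general position. -/

import Mathlib

/-!
For `t³ ≠ 1` with `t(t³ + 8) = 0`, the Cayleyan cubic
`g_t = t(α₀³ + α₁³ + α₂³) − (t³ + 2) α₀α₁α₂` factors as a product of three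
linear forms which are pairwise non-proportional and have no common zero in
`ℂ³ ∖ {0}`: the Cayleyan curve is a union of three lines in general position.
-/

noncomputable section

open MvPolynomial

/-- The polynomial ring `ℂ[α₀, α₁, α₂]`. -/
abbrev PolyRing3 := MvPolynomial (Fin 3) ℂ

/-- The linear form with coefficient vector `c`. -/
def linForm (c : Fin 3 → ℂ) : PolyRing3 := ∑ j, C (c j) * X j

/-- The Cayleyan cubic `g_t = t(α₀³ + α₁³ + α₂³) − (t³ + 2) α₀α₁α₂`. -/
def cayleyanCubic (t : ℂ) : PolyRing3 :=
  C t * (X 0 ^ 3 + X 1 ^ 3 + X 2 ^ 3) - C (t ^ 3 + 2) * (X 0 * X 1 * X 2)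

/-!
For `t = 0` the cubic is `-2 α₀α₁α₂`, the coordinate triangle. Otherwise put `s = -2/t`, so that
`s³ = 1` and `g_t = t (α₀³ + (sα₁)³ + α₂³ - 3 α₀ (sα₁) α₂)`; with a primitive cube root of
unity `ω`, the classical factorization `x³ + y³ + z³ - 3xyz = (x + y + z)(x + ωy + ω²z)(x + ω²y + ωz)`
splits `g_t` into three linear forms. In both cases the coefficient matrix of the three forms is
invertible, which gives both pairwise independence and the absence of a common zero.
-/

open Matrix

theorem LinearIndependent.pair_of_ne {ι K V : Type*} [Ring K] [AddCommGroup V] [Module K V]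
    {v : ι → V} (hv : LinearIndependent K v) {i j : ι} (hij : i ≠ j) :
    LinearIndependent K ![v i, v j] := by
  have hinj : Function.Injective ![i, j] := by
    intro a b
    fin_cases a <;> fin_cases b <;> simp [hij, hij.symm]
  convert hv.comp _ hinj using 1
  ext a
  fin_cases a <;> rfl

theorem sum_cubes_sub_three_mul_eq {R : Type*} [CommRing R] {ω : R} (hω : ω ^ 2 + ω + 1 = 0)
    (x y z : R) :
    x ^ 3 + y ^ 3 + z ^ 3 - 3 * x * y * z =
      (x + y + z) * (x + ω * y + ω ^ 2 * z) * (x + ω ^ 2 * y + ω * z) := by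
  linear_combination
    -(x + y + z) * ((ω - 1) * (y ^ 2 + z ^ 2) + x * y + x * z + (ω ^ 2 - ω + 1) * y * z) * hω

section CubeRootOfUnity

variable {K : Type*} [Semiring K] {ω : K}

theorem ne_zero_of_sq_add_self_add_one_eq_zero [Nontrivial K] (hω : ω ^ 2 + ω + 1 = 0) :
    ω ≠ 0 := by
  rintro rfl
  norm_num at hω

theorem ne_one_of_sq_add_self_add_one_eq_zero [CharZero K] (hω : ω ^ 2 + ω + 1 = 0) :
    ω ≠ 1 := by
  rintro rfl
  norm_num at hω

end CubeRootOfUnity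

theorem Complex.exists_sq_add_self_add_one_eq_zero : ∃ ω : ℂ, ω ^ 2 + ω + 1 = 0 := by
  have h := (Complex.isPrimitiveRoot_exp 3 three_ne_zero).geom_sum_eq_zero (by norm_num)
  simp only [Finset.sum_range_succ, Finset.sum_range_zero] at h
  exact ⟨_, by linear_combination h⟩

theorem eval_linForm (c x : Fin 3 → ℂ) : eval x (linForm c) = c ⬝ᵥ x := by
  simp [linForm, dotProduct]

theorem eval_cayleyanCubic (t : ℂ) (x : Fin 3 → ℂ) :
    eval x (cayleyanCubic t) =
      t * (x 0 ^ 3 + x 1 ^ 3 + x 2 ^ 3) - (t ^ 3 + 2) * (x 0 * x 1 * x 2) := by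
  simp [cayleyanCubic]

theorem cayleyanCubic_zero :
    cayleyanCubic 0 = linForm ![-2, 0, 0] * linForm ![0, 1, 0] * linForm ![0, 0, 1] := by
  apply MvPolynomial.funext
  intro x
  simp only [map_mul, eval_cayleyanCubic, eval_linForm, dotProduct, Fin.sum_univ_three,
    cons_val_zero, cons_val_one, cons_val_two, head_cons, tail_cons]
  ring

/-- Rows: the coefficients of `t (α₀ + sα₁ + α₂)`, `α₀ + ωsα₁ + ω²α₂`, `α₀ + ω²sα₁ + ωα₂`, for
`ts = -2`. -/
def cayleyanFactors (t s ω : ℂ) : Matrix (Fin 3) (Fin 3) ℂ :=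
  !![t, -2, t; 1, ω * s, ω ^ 2; 1, ω ^ 2 * s, ω]

section Factors

variable {t s ω : ℂ}

theorem cayleyanCubic_eq_prod_linForm_cayleyanFactors (hω : ω ^ 2 + ω + 1 = 0)
    (hts : t * s = -2) (hs : s ^ 3 = 1) :
    cayleyanCubic t =
      linForm (cayleyanFactors t s ω 0) * linForm (cayleyanFactors t s ω 1) *
        linForm (cayleyanFactors t s ω 2) := by
  have ht : t ^ 3 = -8 := by
    linear_combination -t ^ 3 * hs + ((t * s) ^ 2 - 2 * (t * s) + 4) * hts
  apply MvPolynomial.funext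
  intro x
  simp only [map_mul, eval_cayleyanCubic, eval_linForm, cayleyanFactors, dotProduct,
    Fin.sum_univ_three, of_apply, cons_val_zero, cons_val_one, cons_val_two, head_cons, tail_cons]
  have hsum := sum_cubes_sub_three_mul_eq hω (x 0) (s * x 1) (x 2)
  linear_combination t * hsum - t * x 1 ^ 3 * hs + x 0 * x 1 * x 2 * (3 * hts - ht) +
    x 1 * (x 0 + ω * s * x 1 + ω ^ 2 * x 2) * (x 0 + ω ^ 2 * s * x 1 + ω * x 2) * hts

theorem det_cayleyanFactors (hω : ω ^ 2 + ω + 1 = 0) (hts : t * s = -2) :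
    (cayleyanFactors t s ω).det = 6 * ω * (1 - ω) := by
  rw [cayleyanFactors, det_fin_three]
  simp only [of_apply, cons_val', cons_val_zero, cons_val_one, cons_val_two, head_cons, tail_cons,
    empty_val', cons_val_fin_one, head_fin_const]
  linear_combination (-ω + 2 * ω ^ 2 - ω ^ 4) * hts + 2 * ω * (ω - 1) * hω

end Factors

theorem exists_cayleyanCubic_eq_prod_linForm_of_det_ne_zero {t : ℂ}
    (hj : t * (t ^ 3 + 8) = 0) :
    ∃ c : Matrix (Fin 3) (Fin 3) ℂ,
      cayleyanCubic t = linForm (c 0) * linForm (c 1) * linForm (c 2) ∧ c.det ≠ 0 := by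
  rcases mul_eq_zero.mp hj with rfl | ht
  · exact ⟨!![-2, 0, 0; 0, 1, 0; 0, 0, 1], cayleyanCubic_zero, by simp [det_fin_three]⟩
  obtain ⟨ω, hω⟩ := Complex.exists_sq_add_self_add_one_eq_zero
  have ht0 : t ≠ 0 := by
    rintro rfl
    norm_num at ht
  have hts : t * (-2 / t) = -2 := mul_div_cancel₀ _ ht0
  have hs : (-2 / t) ^ 3 = 1 := by
    rw [div_pow, div_eq_one_iff_eq (pow_ne_zero 3 ht0)]
    linear_combination -ht
  refine ⟨_, cayleyanCubic_eq_prod_linForm_cayleyanFactors hω hts hs, ?_⟩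
  rw [det_cayleyanFactors hω hts]
  exact mul_ne_zero (mul_ne_zero (by norm_num) (ne_zero_of_sq_add_self_add_one_eq_zero hω))
    (sub_ne_zero.mpr (ne_one_of_sq_add_self_add_one_eq_zero hω).symm)

theorem cayleyan_three_lines_general_position_general (t : ℂ)
    (hj : t * (t ^ 3 + 8) = 0) :
    ∃ c : Fin 3 → (Fin 3 → ℂ),
      cayleyanCubic t = linForm (c 0) * linForm (c 1) * linForm (c 2) ∧
      (∀ i j, i ≠ j → LinearIndependent ℂ ![c i, c j]) ∧
      (∀ z : Fin 3 → ℂ, (∀ i, ∑ j, c i j * z j = 0) → z = 0) := by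
  obtain ⟨c, hfactor, hdet⟩ := exists_cayleyanCubic_eq_prod_linForm_of_det_ne_zero hj
  exact ⟨c, hfactor, fun i j hij => (linearIndependent_rows_of_det_ne_zero hdet).pair_of_ne hij,
    fun z hz => eq_zero_of_mulVec_eq_zero hdet (funext hz)⟩

theorem cayleyan_three_lines_general_position (t : ℂ) (ht : t ^ 3 ≠ 1)
    (hj : t * (t ^ 3 + 8) = 0) :
    ∃ c : Fin 3 → (Fin 3 → ℂ),
      cayleyanCubic t = linForm (c 0) * linForm (c 1) * linForm (c 2) ∧
      (∀ i j, i ≠ j → LinearIndependent ℂ ![c i, c j]) ∧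
      (∀ z : Fin 3 → ℂ, (∀ i, ∑ j, c i j * z j = 0) → z = 0) :=
  cayleyan_three_lines_general_position_general t hj
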